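/- Let Δ be a Cohen-Macaulay simplicial forest on vertex set V(Δ) with R = K[x_v : v ∈ V(Δ)], let F₁ be a special leaf of Δ with A = ⋂_{j : F₁∩G_j ≠ ∅}(F₁ ∩ G_j) ≠ ∅ (the intersection over the facets G_j ≠ F₁ meeting F₁), and let Δ₂ be the simplicial complex whose facet set is (F(Δ) ∖ N_Δ[F₁]) ∪ {A}. Then: (a) I(Δ)^{[k]} + ⟨x_{F₁}⟩ + ⟨x_A⟩ = I(Δ₂)^{[k]} + ⟨x_A⟩ for 2 ≤ k ≤ ν(Δ); (b) A is a special leaf of Δ₂; and (c) Δ₂ is a Cohen-Macaulay simplicial forest. -/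

import Mathlib

open MvPolynomial

/-- A simplicial complex on the vertex set `V`, presented by its set of facets
(the maximal faces).  Every facet is nonempty and no facet contains another. -/
structure SimplicialComplexOn (V : Type) [Fintype V] [DecidableEq V] : Type where
  facets : Finset (Finset V)
  nonempty_facet : ∀ F ∈ facets, F.Nonempty
  antichain : ∀ F ∈ facets, ∀ G ∈ facets, F ⊆ G → F = G

variable {V : Type} [Fintype V] [DecidableEq V]

/-- `F` is a leaf of the collection of facets `S`: either `F` is the only facet, or
there is a facet `G ≠ F` (a joint) with `F ∩ H ⊆ F ∩ G` for every facet `H ≠ F`. -/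
def IsLeafOf (S : Finset (Finset V)) (F : Finset V) : Prop :=
  F ∈ S ∧ ((∀ H ∈ S, H = F) ∨
    ∃ G ∈ S, G ≠ F ∧ ∀ H ∈ S, H ≠ F → F ∩ H ⊆ F ∩ G)

/-- The forest property for a facet collection: every nonempty subcollection
(i.e. every nonempty subcomplex) has a leaf. -/
def HasLeafProp (S : Finset (Finset V)) : Prop :=
  ∀ T ⊆ S, T.Nonempty → ∃ F, IsLeafOf T F

/-- A good leaf: a facet which is a leaf of every subcomplex containing it. -/
def IsGoodLeafOf (S : Finset (Finset V)) (F : Finset V) : Prop :=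
  F ∈ S ∧ ∀ T ⊆ S, F ∈ T → IsLeafOf T F

/-- A special leaf: a leaf `F` such that for all facets `H, H' ≠ F`,
`H ∩ H' ≠ ∅` iff `(H ∩ H') \ F ≠ ∅`. -/
def IsSpecialLeafOf (S : Finset (Finset V)) (F : Finset V) : Prop :=
  IsLeafOf S F ∧ ∀ H ∈ S, ∀ H' ∈ S, H ≠ F → H' ≠ F →
    ((H ∩ H').Nonempty ↔ ((H ∩ H') \ F).Nonempty)

/-- A matching: a subcollection of the facets that is pairwise disjoint. -/
def IsMatchingOf (S : Finset (Finset V)) (M : Finset (Finset V)) : Prop :=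
  M ⊆ S ∧ ∀ F ∈ M, ∀ G ∈ M, F ≠ G → F ∩ G = ∅

/-- The matching number: maximum size of a matching. -/
noncomputable def matchingNumberOf (S : Finset (Finset V)) : ℕ :=
  sSup {n | ∃ M : Finset (Finset V), IsMatchingOf S M ∧ M.card = n}

/-- The facet collection `S` is grafted: it decomposes as `Fs ∪ Gs` where
(1) every vertex of a `G ∈ Gs` lies in some `F ∈ Fs`, (2) `Fs` is exactly the set
of leaves of `S`, (3) `Fs` and `Gs` are disjoint, (4) the members of `Fs` are
pairwise disjoint, and (5) for each `G ∈ Gs`, deleting the facet `G` leaves a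
grafted collection. -/
inductive IsGrafted : Finset (Finset V) → Prop where
  | intro (S Fs Gs : Finset (Finset V))
      (hunion : S = Fs ∪ Gs)
      (hdisj : Disjoint Fs Gs)
      (hcover : ∀ G ∈ Gs, ∀ v ∈ G, ∃ F ∈ Fs, v ∈ F)
      (hleaves : ∀ F, IsLeafOf S F ↔ F ∈ Fs)
      (hFdisj : ∀ F ∈ Fs, ∀ F' ∈ Fs, F ≠ F' → F ∩ F' = ∅)
      (hrec : ∀ G ∈ Gs, IsGrafted (S.erase G)) :
      IsGrafted S

/-- `S` is the (minimal presentation of the) grafting of the collection `Gs`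
with the simplices `Fs`. -/
def IsGraftingDecomp (S Fs Gs : Finset (Finset V)) : Prop :=
  S = Fs ∪ Gs ∧ Disjoint Fs Gs ∧
  (∀ G ∈ Gs, ∀ v ∈ G, ∃ F ∈ Fs, v ∈ F) ∧
  (∀ F, IsLeafOf S F ↔ F ∈ Fs) ∧
  (∀ F ∈ Fs, ∀ F' ∈ Fs, F ≠ F' → F ∩ F' = ∅) ∧
  (∀ G ∈ Gs, IsGrafted (S.erase G))

/-- A Cohen-Macaulay simplicial forest, combinatorially: a grafted simplicial forest. -/
def IsCMForestFacets (S : Finset (Finset V)) : Prop :=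
  HasLeafProp S ∧ IsGrafted S

/-- The closed neighborhood `N[F] = {F} ∪ {G ∈ S : G ≠ F, G ∩ F ≠ ∅}`. -/
def closedNbhd (S : Finset (Finset V)) (F : Finset V) : Finset (Finset V) :=
  insert F (S.filter fun G => G ≠ F ∧ (G ∩ F).Nonempty)

/-- The contraction of the facet collection `S` on `A`: the minimal members of
`{F \ A : F ∈ S}`. -/
def contraction (S : Finset (Finset V)) (A : Finset V) : Finset (Finset V) :=
  (S.image fun F => F \ A).filter fun F' => ∀ G ∈ S, G \ A ⊆ F' → G \ A = F'

variable (K : Type) [Field K]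

/-- The square-free monomial `x_S = ∏_{v ∈ S} x_v`. -/
noncomputable def xMon (S : Finset V) : MvPolynomial V K := ∏ v ∈ S, X v

/-- The facet ideal `I(Δ) = ⟨x_F : F a facet⟩`. -/
noncomputable def facetIdealOf (S : Finset (Finset V)) : Ideal (MvPolynomial V K) :=
  Ideal.span { p | ∃ F ∈ S, p = xMon K F }

/-- The `k`-th square-free power of an ideal: the ideal generated by all
square-free monomials lying in `I ^ k`. -/
noncomputable def sqfreePow (I : Ideal (MvPolynomial V K)) (k : ℕ) :
    Ideal (MvPolynomial V K) :=
  Ideal.span { p | (∃ S : Finset V, p = xMon K S) ∧ p ∈ I ^ k }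

/-- The depth of `R/I` with respect to the homogeneous maximal ideal
`m = ⟨x_v : v ∈ V⟩`: the largest length of an `R/I`-regular sequence of
elements of `m`. -/
noncomputable def gradedDepth (I : Ideal (MvPolynomial V K)) : ℕ :=
  sSup {n | ∃ rs : List (MvPolynomial V K), rs.length = n ∧
    (∀ r ∈ rs, r ∈ Ideal.span (Set.range (X : V → MvPolynomial V K))) ∧
    RingTheory.Sequence.IsRegular (MvPolynomial V K ⧸ I) rs}

/-- `R/I` is Cohen-Macaulay: its depth equals its Krull dimension. -/
def IsCMQuot (I : Ideal (MvPolynomial V K)) : Prop :=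
  ((gradedDepth K I : ℕ∞) : WithBot ℕ∞) = ringKrullDim (MvPolynomial V K ⧸ I)

/-
Every facet of Δ that does not contain A misses F₁ (each neighbour of F₁ contains A), so the
facets of Δ and of Δ₂ not containing A coincide. A square-free monomial `x_T` in `I(Δ)^k` already
lies in the `k`-th power of the ideal of the facets inside `T`; so modulo `x_A` both square-free
powers in (a) are generated by the same monomials.

In Δ₂ the facet A is disjoint from all other facets, which gives (b) and the forest property.
For grafting, the neighbours of F₁ are deleted one at a time, the joint of F₁ last; this leaves
F₁ isolated, and replacing an isolated facet by a set disjoint from the remaining facets changes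
neither the other leaves nor the recursive structure.
-/

set_option linter.unusedSectionVars false

open Finset

section Leaves

variable {S T U : Finset (Finset V)} {A B F G X : Finset V}

def openNbhd (S : Finset (Finset V)) (F : Finset V) : Finset (Finset V) :=
  S.filter fun G => G ≠ F ∧ (G ∩ F).Nonempty

theorem mem_sdiff_closedNbhd :
    X ∈ S \ closedNbhd S F ↔ X ∈ S ∧ X ≠ F ∧ Disjoint X F := by
  simp only [closedNbhd, mem_sdiff, mem_insert, mem_filter,
    ← not_disjoint_iff_nonempty_inter]
  tauto

theorem sdiff_closedNbhd_eq : S \ closedNbhd S F = (S \ openNbhd S F).erase F :=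
  sdiff_insert _ _ _

theorem isLeafOf_of_forall_disjoint (hF : F ∈ T) (h : ∀ H ∈ T, H ≠ F → Disjoint H F) :
    IsLeafOf T F := by
  refine ⟨hF, ?_⟩
  by_cases hT : ∀ H ∈ T, H = F
  · exact Or.inl hT
  obtain ⟨G, hG, hGF⟩ : ∃ G ∈ T, G ≠ F := by simpa using hT
  refine Or.inr ⟨G, hG, hGF, fun H hH hHF => ?_⟩
  rw [disjoint_iff_inter_eq_empty.1 (h H hH hHF).symm]
  exact empty_subset _

theorem isLeafOf_of_joint (hTS : T ⊆ S) (hF : F ∈ T) (hG : G ∈ T) (hGF : G ≠ F)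
    (hjoint : ∀ H ∈ S, H ≠ F → F ∩ H ⊆ F ∩ G) : IsLeafOf T F :=
  ⟨hF, Or.inr ⟨G, hG, hGF, fun H hH => hjoint H (hTS hH)⟩⟩

theorem isSpecialLeafOf_of_forall_disjoint (hF : F ∈ T) (h : ∀ H ∈ T, H ≠ F → Disjoint H F) :
    IsSpecialLeafOf T F := by
  refine ⟨isLeafOf_of_forall_disjoint hF h, fun H hH H' _ hHF _ => ?_⟩
  rw [sdiff_eq_self_of_disjoint ((h H hH hHF).mono_left inter_subset_left)]

/-- A facet disjoint from `X` can serve as a joint of `X` only when `X` meets no other facet,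
and then any other facet does as well. -/
theorem isLeafOf_insert_iff (hX : X ∈ U) (hB : B ∉ U) (hXB : Disjoint X B) :
    IsLeafOf (insert B U) X ↔ IsLeafOf U X := by
  have hXB' : X ∩ B = ∅ := disjoint_iff_inter_eq_empty.1 hXB
  have hBX : B ≠ X := fun h => hB (h ▸ hX)
  constructor
  · rintro ⟨-, hall | ⟨G, hG, hGX, hjoint⟩⟩
    · exact absurd (hall B (mem_insert_self B U)) hBX
    obtain rfl | hGU := mem_insert.1 hG
    · refine isLeafOf_of_forall_disjoint hX fun H hH hHX => ?_
      rw [disjoint_iff_inter_eq_empty, inter_comm,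
        ← subset_empty, ← hXB']
      exact hjoint H (mem_insert_of_mem hH) hHX
    · exact ⟨hX, Or.inr ⟨G, hGU, hGX, fun H hH => hjoint H (mem_insert_of_mem hH)⟩⟩
  · rintro ⟨-, hall | ⟨G, hG, hGX, hjoint⟩⟩
    · refine ⟨mem_insert_of_mem hX, Or.inr ⟨B, mem_insert_self B U, hBX, ?_⟩⟩
      intro H hH hHX
      obtain rfl | hHU := mem_insert.1 hH
      · exact subset_rfl
      · exact absurd (hall H hHU) hHX
    · refine ⟨mem_insert_of_mem hX, Or.inr ⟨G, mem_insert_of_mem hG, hGX, ?_⟩⟩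
      intro H hH hHX
      obtain rfl | hHU := mem_insert.1 hH
      · rw [hXB']
        exact empty_subset _
      · exact hjoint H hHU hHX

theorem isLeafOf_insert_erase_iff (hF : F ∈ T) (hA : A ∉ T)
    (hFdisj : ∀ H ∈ T, H ≠ F → Disjoint H F) (hAdisj : ∀ H ∈ T, H ≠ F → Disjoint H A) :
    IsLeafOf (insert A (T.erase F)) X ↔ X = A ∨ X ≠ F ∧ IsLeafOf T X := by
  by_cases hXA : X = A
  · subst hXA
    refine iff_of_true (isLeafOf_of_forall_disjoint (mem_insert_self X _) ?_) (Or.inl rfl)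
    intro H hH hHX
    have hH' := mem_erase.1 ((mem_insert.1 hH).resolve_left hHX)
    exact hAdisj H hH'.2 hH'.1
  by_cases hX : X ∈ T.erase F
  · obtain ⟨hXF, hXT⟩ := mem_erase.1 hX
    conv_rhs => rw [← insert_erase hF]
    rw [isLeafOf_insert_iff hX (fun h => hA (mem_of_mem_erase h)) (hAdisj X hXT hXF),
      isLeafOf_insert_iff hX (notMem_erase F T) (hFdisj X hXT hXF)]
    simp [hXA, hXF]
  · refine iff_of_false (fun hleaf => ?_) ?_
    · exact hX ((mem_insert.1 hleaf.1).resolve_left hXA)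
    · rintro (hXA' | ⟨hXF, hleaf⟩)
      · exact hXA hXA'
      · exact hX (mem_erase.2 ⟨hXF, hleaf.1⟩)

theorem HasLeafProp.mono (hS : HasLeafProp S) (hTS : T ⊆ S) : HasLeafProp T :=
  fun T' hT' => hS T' (hT'.trans hTS)

theorem HasLeafProp.insert_of_forall_disjoint (hU : HasLeafProp U)
    (hA : ∀ H ∈ U, Disjoint H A) : HasLeafProp (insert A U) := by
  intro T hT hTne
  by_cases hAT : A ∈ T
  · refine ⟨A, isLeafOf_of_forall_disjoint hAT fun H hH hHA => hA H ?_⟩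
    exact (mem_insert.1 (hT hH)).resolve_left hHA
  · refine hU T (fun H hH => ?_) hTne
    exact (mem_insert.1 (hT hH)).resolve_left (ne_of_mem_of_not_mem hH hAT)

end Leaves

section SquarefreePowers

variable {K}

theorem facetIdealOf_mono {S S' : Finset (Finset V)} (h : S ⊆ S') :
    facetIdealOf K S ≤ facetIdealOf K S' :=
  Ideal.span_mono fun _ ⟨F, hF, hp⟩ => ⟨F, h hF, hp⟩

theorem xMon_dvd_xMon {F T : Finset V} (h : F ⊆ T) : xMon K F ∣ xMon K T :=
  prod_dvd_prod_of_subset F T X h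

/-- Setting the variables outside `T` to zero fixes `x_T` and kills every `x_F` with `F ⊄ T`. -/
theorem xMon_mem_facetIdealOf_filter_pow {S : Finset (Finset V)} {T : Finset V} {k : ℕ}
    (h : xMon K T ∈ facetIdealOf K S ^ k) :
    xMon K T ∈ facetIdealOf K (S.filter (· ⊆ T)) ^ k := by
  let φ : MvPolynomial V K →ₐ[K] MvPolynomial V K := aeval fun v => if v ∈ T then X v else 0
  have hφ (F : Finset V) : φ (xMon K F) = if F ⊆ T then xMon K F else 0 := by
    simp only [φ, xMon, map_prod, aeval_X, prod_ite_zero]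
    rfl
  have hmap : (facetIdealOf K S).map φ ≤ facetIdealOf K (S.filter (· ⊆ T)) := by
    rw [facetIdealOf, Ideal.map_span, Ideal.span_le]
    rintro _ ⟨_, ⟨F, hF, rfl⟩, rfl⟩
    rw [hφ]
    split_ifs with hFT
    · exact Ideal.subset_span ⟨F, mem_filter.2 ⟨hF, hFT⟩, rfl⟩
    · exact zero_mem _
  have hT := Ideal.mem_map_of_mem φ h
  rw [Ideal.map_pow, hφ, if_pos subset_rfl] at hT
  exact Ideal.pow_right_mono hmap k hT

theorem sqfreePow_facetIdealOf_le_sup {S S' : Finset (Finset V)} {A : Finset V} (k : ℕ)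
    (h : ∀ F ∈ S, ¬A ⊆ F → F ∈ S') :
    sqfreePow K (facetIdealOf K S) k ≤
      sqfreePow K (facetIdealOf K S') k ⊔ Ideal.span {xMon K A} := by
  refine Ideal.span_le.2 ?_
  rintro _ ⟨⟨T, rfl⟩, hT⟩
  by_cases hAT : A ⊆ T
  · exact Ideal.mem_sup_right (Ideal.mem_span_singleton.2 (xMon_dvd_xMon hAT))
  · have hsub : S.filter (· ⊆ T) ⊆ S' := fun F hF =>
      have ⟨hFS, hFT⟩ := mem_filter.1 hF
      h F hFS fun hAF => hAT (hAF.trans hFT)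
    exact Ideal.mem_sup_left <| Ideal.subset_span
      ⟨⟨T, rfl⟩, Ideal.pow_right_mono (facetIdealOf_mono hsub) k
        (xMon_mem_facetIdealOf_filter_pow hT)⟩

theorem sqfreePow_add_span_eq {S : Finset (Finset V)} {F A : Finset V} (k : ℕ) (hAF : A ⊆ F)
    (hA : ∀ G ∈ S, G ≠ F → (G ∩ F).Nonempty → A ⊆ G) :
    sqfreePow K (facetIdealOf K S) k + Ideal.span {xMon K F} + Ideal.span {xMon K A} =
      sqfreePow K (facetIdealOf K (insert A (S \ closedNbhd S F))) k +
        Ideal.span {xMon K A} := by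
  have hS : ∀ G ∈ S, ¬A ⊆ G → G ∈ insert A (S \ closedNbhd S F) := fun G hG hAG =>
    have hGF : G ≠ F := fun h => hAG (h ▸ hAF)
    mem_insert_of_mem <| mem_sdiff_closedNbhd.2 ⟨hG, hGF, not_not.1 fun hmeet =>
      hAG (hA G hG hGF (not_disjoint_iff_nonempty_inter.1 hmeet))⟩
  have hS' : ∀ G ∈ insert A (S \ closedNbhd S F), ¬A ⊆ G → G ∈ S := fun G hG hAG =>
    (mem_sdiff_closedNbhd.1 <| (mem_insert.1 hG).resolve_left fun h => hAG h.ge).1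
  simp only [Submodule.add_eq_sup]
  apply le_antisymm
  · refine sup_le (sup_le (sqfreePow_facetIdealOf_le_sup k hS) ?_) le_sup_right
    exact (Ideal.span_singleton_le_span_singleton.2 (xMon_dvd_xMon hAF)).trans le_sup_right
  · exact sup_le ((sqfreePow_facetIdealOf_le_sup k hS').trans (sup_le_sup_right le_sup_left _))
      le_sup_right

end SquarefreePowers

namespace IsGrafted

variable {S T : Finset (Finset V)} {A F G X : Finset V}

theorem inter_eq_empty_of_isLeafOf (hS : IsGrafted S) (hF : IsLeafOf S F) (hX : IsLeafOf S X)
    (hFX : F ≠ X) : F ∩ X = ∅ := by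
  cases hS with
  | intro _ Fs _ _ _ _ hleaves hFdisj _ =>
    exact hFdisj F ((hleaves F).1 hF) X ((hleaves X).1 hX) hFX

theorem erase (hS : IsGrafted S) (hX : X ∈ S) (hXleaf : ¬IsLeafOf S X) :
    IsGrafted (S.erase X) := by
  cases hS with
  | intro _ Fs Gs hunion _ _ hleaves _ hrec =>
    rw [hunion, mem_union, ← hleaves] at hX
    exact hrec X (hX.resolve_left hXleaf)

/-- Leaves of a grafted complex are pairwise disjoint, so a facet meeting a leaf is no leaf. -/
theorem erase_of_inter_nonempty (hS : IsGrafted S) (hF : IsLeafOf S F) (hX : X ∈ S)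
    (hXF : X ≠ F) (hmeet : (X ∩ F).Nonempty) : IsGrafted (S.erase X) :=
  hS.erase hX fun hXleaf => by
    rw [hS.inter_eq_empty_of_isLeafOf hXleaf hF hXF] at hmeet
    exact not_nonempty_empty hmeet

/-- As long as the joint `G` of the leaf `F` is kept, `F` stays a leaf, so the neighbours of `F`
other than `G` can be deleted one at a time. -/
theorem sdiff_of_subset_openNbhd (hS : IsGrafted S) (hF : F ∈ S) (hG : G ∈ S) (hGF : G ≠ F)
    (hjoint : ∀ H ∈ S, H ≠ F → F ∩ H ⊆ F ∩ G) {D : Finset (Finset V)}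
    (hD : D ⊆ (openNbhd S F).erase G) : IsGrafted (S \ D) := by
  induction D using Finset.induction_on with
  | empty => rwa [sdiff_empty]
  | @insert Y D hYD ih =>
    obtain ⟨hY, hD⟩ := insert_subset_iff.1 hD
    obtain ⟨hYG, hYS, hYF, hYmeet⟩ : Y ≠ G ∧ Y ∈ S ∧ Y ≠ F ∧ (Y ∩ F).Nonempty := by
      simpa [openNbhd, and_assoc] using hY
    have hFleaf : IsLeafOf (S \ D) F := isLeafOf_of_joint sdiff_subset
      (mem_sdiff.2 ⟨hF, fun hFD => by simpa [openNbhd] using mem_of_mem_erase (hD hFD)⟩)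
      (mem_sdiff.2 ⟨hG, fun hGD => (mem_erase.1 (hD hGD)).1 rfl⟩) hGF hjoint
    rw [sdiff_insert]
    exact (ih hD).erase_of_inter_nonempty hFleaf (mem_sdiff.2 ⟨hYS, hYD⟩) hYF hYmeet

theorem sdiff_openNbhd (hS : IsGrafted S) (hF : IsLeafOf S F) :
    IsGrafted (S \ openNbhd S F) := by
  obtain ⟨hFS, hall | ⟨G, hG, hGF, hjoint⟩⟩ := hF
  · have hN : openNbhd S F = ∅ := filter_false_of_mem fun H hH hH' => hH'.1 (hall H hH)
    rwa [hN, sdiff_empty]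
  by_cases hGN : G ∈ openNbhd S F
  · have hrest := hS.sdiff_of_subset_openNbhd hFS hG hGF hjoint subset_rfl
    have hFleaf : IsLeafOf (S \ (openNbhd S F).erase G) F :=
      isLeafOf_of_joint sdiff_subset (by simp [hFS, openNbhd]) (by simp [hG]) hGF hjoint
    have hsplit : S \ openNbhd S F = (S \ (openNbhd S F).erase G).erase G := by
      rw [← sdiff_insert, insert_erase hGN]
    rw [hsplit]
    exact hrest.erase_of_inter_nonempty hFleaf (by simp [hG]) hGF
      (mem_filter.1 hGN).2.2
  · rw [← erase_eq_of_notMem hGN]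
    exact hS.sdiff_of_subset_openNbhd hFS hG hGF hjoint subset_rfl

theorem insert_erase_of_forall_disjoint (hT : IsGrafted T) (hF : F ∈ T)
    (hFdisj : ∀ H ∈ T, H ≠ F → Disjoint H F) (hAdisj : ∀ H ∈ T, H ≠ F → Disjoint H A)
    (hA : A ∉ T.erase F) : IsGrafted (insert A (T.erase F)) := by
  by_cases hAF : A = F
  · rwa [hAF, insert_erase hF]
  have hAT : A ∉ T := fun h => hA (mem_erase.2 ⟨hAF, h⟩)
  clear hA
  induction hT with
  | intro T Fs Gs hunion hdisj hcover hleaves hFsdisj _ ih =>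
  have hFFs : F ∈ Fs := (hleaves F).1 (isLeafOf_of_forall_disjoint hF hFdisj)
  have hGsT : Gs ⊆ T := hunion ▸ subset_union_right
  have hFGs : F ∉ Gs := disjoint_left.1 hdisj hFFs
  have hAGs : A ∉ Gs := fun h => hAT (hGsT h)
  refine IsGrafted.intro _ (insert A (Fs.erase F)) Gs ?_ ?_ ?_ ?_ ?_ ?_
  · rw [hunion, erase_union_distrib, erase_eq_of_notMem hFGs, insert_union]
  · exact disjoint_insert_left.2 ⟨hAGs, hdisj.mono_left (erase_subset F Fs)⟩
  · intro G hG v hv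
    obtain ⟨F', hF', hvF'⟩ := hcover G hG v hv
    refine ⟨F', mem_insert_of_mem (mem_erase.2 ⟨?_, hF'⟩), hvF'⟩
    rintro rfl
    exact disjoint_left.1 (hFdisj G (hGsT hG) fun h => hFGs (h ▸ hG)) hv hvF'
  · intro X
    rw [isLeafOf_insert_erase_iff hF hAT hFdisj hAdisj, hleaves]
    simp only [mem_insert, mem_erase]
  · have hAFs : ∀ X ∈ Fs.erase F, A ∩ X = ∅ := fun X hX =>
      have ⟨hXF, hXFs⟩ := mem_erase.1 hX
      disjoint_iff_inter_eq_empty.1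
        (hAdisj X (hunion ▸ mem_union_left Gs hXFs) hXF).symm
    simp only [mem_insert]
    rintro X (rfl | hX) Y (rfl | hY) hXY
    · exact absurd rfl hXY
    · exact hAFs Y hY
    · rw [inter_comm]
      exact hAFs X hX
    · exact hFsdisj X (mem_of_mem_erase hX) Y (mem_of_mem_erase hY) hXY
  · intro G hG
    have hGF : G ≠ F := fun h => hFGs (h ▸ hG)
    have hGA : G ≠ A := fun h => hAGs (h ▸ hG)
    rw [erase_insert_of_ne hGA.symm, erase_right_comm]
    exact ih G hG (mem_erase.2 ⟨hGF.symm, hF⟩)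
      (fun H hH hHF => hFdisj H (mem_of_mem_erase hH) hHF)
      (fun H hH hHF => hAdisj H (mem_of_mem_erase hH) hHF)
      (fun h => hAT (mem_of_mem_erase h))

theorem insert_sdiff_closedNbhd (hS : IsGrafted S) (hF : IsLeafOf S F) (hAF : A ⊆ F)
    (hA : A ∉ S \ closedNbhd S F) :
    IsGrafted (insert A (S \ closedNbhd S F)) := by
  rw [sdiff_closedNbhd_eq] at hA ⊢
  have hdisj : ∀ H ∈ S \ openNbhd S F, H ≠ F → Disjoint H F := fun H hH hHF =>
    (mem_sdiff_closedNbhd.1 (by rw [sdiff_closedNbhd_eq]; exact mem_erase.2 ⟨hHF, hH⟩)).2.2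
  exact (hS.sdiff_openNbhd hF).insert_erase_of_forall_disjoint
    (mem_sdiff.2 ⟨hF.1, fun h => (mem_filter.1 h).2.1 rfl⟩) hdisj
    (fun H hH hHF => (hdisj H hH hHF).mono_right hAF) hA

end IsGrafted

section Statements

variable {V : Type} [Fintype V] [DecidableEq V] (K : Type) [Field K]

theorem stmt16 (Δ : SimplicialComplexOn V)
    (hCM : IsCMForestFacets Δ.facets)
    (F₁ : Finset V) (hspec : IsSpecialLeafOf Δ.facets F₁)
    (A : Finset V)
    (hAdef : A = F₁.filter fun v =>
      ∀ G ∈ Δ.facets, G ≠ F₁ → (F₁ ∩ G).Nonempty → v ∈ G)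
    (Δ₂ : Finset (Finset V))
    (hΔ₂ : Δ₂ = insert A (Δ.facets \ closedNbhd Δ.facets F₁)) :
    (∀ k : ℕ, 2 ≤ k → k ≤ matchingNumberOf Δ.facets →
      sqfreePow K (facetIdealOf K Δ.facets) k + Ideal.span {xMon K F₁} +
          Ideal.span {xMon K A} =
        sqfreePow K (facetIdealOf K Δ₂) k + Ideal.span {xMon K A}) ∧
    IsSpecialLeafOf Δ₂ A ∧
    IsCMForestFacets Δ₂ := by
  obtain ⟨hforest, hgraft⟩ := hCM
  have hAF : A ⊆ F₁ := hAdef ▸ filter_subset _ _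
  have hA : ∀ G ∈ Δ.facets, G ≠ F₁ → (G ∩ F₁).Nonempty → A ⊆ G := fun G hG hGF hmeet v hv => by
    rw [hAdef, mem_filter] at hv
    exact hv.2 G hG hGF (inter_comm G F₁ ▸ hmeet)
  have hdisj : ∀ H ∈ Δ.facets \ closedNbhd Δ.facets F₁, Disjoint H A := fun H hH =>
    (mem_sdiff_closedNbhd.1 hH).2.2.mono_right hAF
  have hAnot : A ∉ Δ.facets \ closedNbhd Δ.facets F₁ := fun h =>
    have ⟨hAΔ, hAF₁, _⟩ := mem_sdiff_closedNbhd.1 h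
    hAF₁ (Δ.antichain A hAΔ F₁ hspec.1.1 hAF)
  subst hΔ₂
  refine ⟨fun k _ _ => sqfreePow_add_span_eq k hAF hA, ?_, ?_, ?_⟩
  · exact isSpecialLeafOf_of_forall_disjoint (mem_insert_self _ _) fun H hH hHA =>
      hdisj H ((mem_insert.1 hH).resolve_left hHA)
  · exact (hforest.mono sdiff_subset).insert_of_forall_disjoint hdisj
  · exact hgraft.insert_sdiff_closedNbhd hspec.1 hAF hAnot

end Statements
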